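/- arXiv:2112.14651 — 8 statements merged into one kernel-verified Lean document; each statement's English description precedes it below -/
import Mathlib

section
/- Let E and F be real normed vector spaces, let x ∈ E, and let G be a map defined on an open neighborhood of x in E with values in F that is differentiable at x (with derivative DG(x)). Then the limit as δ → 0⁺ of the supremum, over all x̃ with 0 < ‖x̃ − x‖ < δ, of ‖G(x̃) − G(x)‖ / ‖x̃ − x‖ exists and equals the operator norm ‖DG(x)‖. (In words: the condition number of a differentiable map equals the operator norm of its differential.) -/
/-- The condition number of a map `G` at `x`, i.e. the limit as `δ → 0⁺` of the supremum
over all `x̃` (in the domain `U` of `G`) with `0 < ‖x̃ - x‖ < δ` of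
`‖G x̃ - G x‖ / ‖x̃ - x‖`, equals the operator norm of the derivative of `G` at `x`. -/
theorem condition_number_eq_opNorm_of_differentiable
    {E F : Type*} [NormedAddCommGroup E] [NormedSpace ℝ E]
    [NormedAddCommGroup F] [NormedSpace ℝ F]
    (U : Set E) (hU : IsOpen U) (x : E) (hx : x ∈ U)
    (G : E → F) (DG : E →L[ℝ] F) (hG : HasFDerivWithinAt G DG U x) :
    Filter.Tendsto
      (fun δ : ℝ =>
        sSup {r : ℝ | ∃ x' ∈ U, 0 < ‖x' - x‖ ∧ ‖x' - x‖ < δ ∧ r = ‖G x' - G x‖ / ‖x' - x‖})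
      (nhdsWithin 0 (Set.Ioi 0)) (nhds ‖DG‖) := by
  rw [Metric.tendsto_nhdsWithin_nhds]
  intro ε hε
  -- the little-o estimate from differentiability, with constant ε/2
  have h1 : ∀ᶠ x' in nhdsWithin x U,
      ‖G x' - G x - DG (x' - x)‖ ≤ ε / 2 * ‖x' - x‖ :=
    hG.isLittleO.def (by positivity)
  rw [Filter.eventually_iff, Metric.mem_nhdsWithin_iff] at h1
  obtain ⟨δ₁, hδ₁, hball⟩ := h1
  obtain ⟨δ₂, hδ₂, hball2⟩ := Metric.isOpen_iff.1 hU x hx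
  refine ⟨min δ₁ δ₂, lt_min hδ₁ hδ₂, ?_⟩
  intro δ (hδ : 0 < δ) hdist
  rw [Real.dist_0_eq_abs, abs_of_pos hδ] at hdist
  have hδδ₁ : δ < δ₁ := hdist.trans_le (min_le_left _ _)
  have hδδ₂ : δ < δ₂ := hdist.trans_le (min_le_right _ _)
  set S := {r : ℝ | ∃ x' ∈ U, 0 < ‖x' - x‖ ∧ ‖x' - x‖ < δ ∧ r = ‖G x' - G x‖ / ‖x' - x‖}
  -- the key estimate for elements of S
  have key : ∀ r ∈ S, r ≤ ‖DG‖ + ε / 2 := by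
    rintro r ⟨x', hx'U, hpos, hlt, rfl⟩
    have hmem : x' ∈ Metric.ball x δ₁ ∩ U := by
      constructor
      · rw [Metric.mem_ball, dist_eq_norm]
        exact hlt.trans hδδ₁
      · exact hx'U
    have hb := hball hmem
    have h2 : ‖G x' - G x‖ ≤ (‖DG‖ + ε / 2) * ‖x' - x‖ := by
      calc ‖G x' - G x‖ ≤ ‖G x' - G x - DG (x' - x)‖ + ‖DG (x' - x)‖ := by
            simpa using norm_add_le (G x' - G x - DG (x' - x)) (DG (x' - x))
        _ ≤ ε / 2 * ‖x' - x‖ + ‖DG‖ * ‖x' - x‖ :=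
            add_le_add hb (DG.le_opNorm _)
        _ = (‖DG‖ + ε / 2) * ‖x' - x‖ := by ring
    rw [div_le_iff₀ hpos]
    exact h2
  have hbdd : BddAbove S := ⟨‖DG‖ + ε / 2, key⟩
  have hSnonneg : ∀ r ∈ S, (0 : ℝ) ≤ r := by
    rintro r ⟨x', _, hpos, _, rfl⟩
    positivity
  have hupper : sSup S ≤ ‖DG‖ + ε / 2 :=
    Real.sSup_le key (by positivity)
  -- lower bound
  have hlower : ‖DG‖ - ε < sSup S := by
    rcases lt_or_ge ‖DG‖ ε with hcase | hcase
    · have : (0 : ℝ) ≤ sSup S := Real.sSup_nonneg hSnonneg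
      linarith
    · -- pick a good direction v
      obtain ⟨v, hv1, hvDG⟩ := DG.exists_lt_apply_of_lt_opNorm
        (show ‖DG‖ - ε / 2 < ‖DG‖ by linarith)
      have hDGv : (0 : ℝ) < ‖DG v‖ := by linarith
      have hv0 : v ≠ 0 := by
        intro h; rw [h] at hvDG; simp at hvDG; linarith
      have hvn : (0 : ℝ) < ‖v‖ := norm_pos_iff.2 hv0
      set t : ℝ := δ / (2 * ‖v‖) with ht
      have htpos : 0 < t := by positivity
      set x' : E := x + t • v with hx'
      have hnorm : ‖x' - x‖ = δ / 2 := by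
        rw [hx', add_sub_cancel_left, norm_smul, Real.norm_eq_abs,
          abs_of_pos htpos, ht]
        field_simp
      have hpos' : 0 < ‖x' - x‖ := by rw [hnorm]; positivity
      have hlt' : ‖x' - x‖ < δ := by rw [hnorm]; linarith
      have hx'U : x' ∈ U := by
        apply hball2
        rw [Metric.mem_ball, dist_eq_norm, hnorm]
        linarith
      have hmemS : ‖G x' - G x‖ / ‖x' - x‖ ∈ S :=
        ⟨x', hx'U, hpos', hlt', rfl⟩
      have hblt : ‖G x' - G x - DG (x' - x)‖ ≤ ε / 2 * ‖x' - x‖ := by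
        apply hball
        constructor
        · rw [Metric.mem_ball, dist_eq_norm]
          exact hlt'.trans hδδ₁
        · exact hx'U
      have hDGx' : ‖DG (x' - x)‖ = t * ‖DG v‖ := by
        rw [hx', add_sub_cancel_left, map_smul, norm_smul, Real.norm_eq_abs,
          abs_of_pos htpos]
      have hlow : (‖DG v‖ / ‖v‖ - ε / 2) ≤ ‖G x' - G x‖ / ‖x' - x‖ := by
        rw [le_div_iff₀ hpos']
        have h3 : ‖DG (x' - x)‖ - ‖G x' - G x - DG (x' - x)‖ ≤ ‖G x' - G x‖ := by
          have := norm_sub_norm_le (DG (x' - x)) (DG (x' - x) - (G x' - G x))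
          simp only [sub_sub_cancel] at this
          calc ‖DG (x' - x)‖ - ‖G x' - G x - DG (x' - x)‖
              = ‖DG (x' - x)‖ - ‖DG (x' - x) - (G x' - G x)‖ := by
                rw [show G x' - G x - DG (x' - x) = -(DG (x' - x) - (G x' - G x)) by abel, norm_neg]
            _ ≤ ‖G x' - G x‖ := this
        have hx'x : ‖x' - x‖ = t * ‖v‖ := by
          rw [hx', add_sub_cancel_left, norm_smul, Real.norm_eq_abs, abs_of_pos htpos]
        have : (‖DG v‖ / ‖v‖ - ε / 2) * ‖x' - x‖
            = t * ‖DG v‖ - ε / 2 * ‖x' - x‖ := by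
          rw [hx'x]; field_simp
        rw [this, ← hDGx']
        linarith
      have hratio : ‖DG‖ - ε < ‖DG v‖ / ‖v‖ - ε / 2 := by
        have h4 : ‖DG v‖ ≤ ‖DG v‖ / ‖v‖ := by
          rw [le_div_iff₀ hvn]
          nlinarith
        linarith
      have := le_csSup hbdd hmemS
      linarith
  rw [Real.dist_eq, abs_sub_lt_iff]
  constructor <;> linarith
end

section
/- Let R be a 3×3 real matrix with RᵀR = I (R orthogonal) and let t ∈ ℝ³ with ‖t‖ = 1. If s, δt ∈ ℝ³ satisfy ⟨t, δt⟩ = 0 and R[s]×[t]× + R[δt]× = 0 (as 3×3 matrices), then s = 0 and δt = 0. (This is the injectivity of the differential of the map (R,t) ↦ R[t]× from SO(3) × S² to the essential variety, showing that map is a submersion.) -/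
/-!
Multiplying by `Rᵀ` removes `R`, leaving `[s]×[t]× + [δt]× = 0`. Since
`[s]×[t]× = t sᵀ - ⟨s, t⟩ I` and `[δt]×` is traceless, taking traces gives `⟨s, t⟩ = 0`, so
`t sᵀ + [δt]× = 0`. Applied to `t` this says `δt × t = 0`; together with `δt ⊥ t` and `t ≠ 0`
this forces `δt = 0`, and then `t sᵀ = 0` forces `s = 0`.
-/

open scoped RealInnerProductSpace
open Matrix

/-- For `t = (t₁,t₂,t₃) ∈ ℝ³`, the skew-symmetric matrix `[t]×` of cross product with `t`. -/
def crossMx (t : Fin 3 → ℝ) : Matrix (Fin 3) (Fin 3) ℝ :=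
  !![0, -t 2, t 1; t 2, 0, -t 0; -t 1, t 0, 0]

theorem crossMx_mulVec (t a : Fin 3 → ℝ) : crossMx t *ᵥ a = t ⨯₃ a := by
  ext i
  fin_cases i <;> simp [crossMx, cross_apply, mulVec, vecHead, vecTail] <;> ring

theorem trace_crossMx (t : Fin 3 → ℝ) : trace (crossMx t) = 0 := by
  simp [crossMx, trace_fin_three]

theorem crossMx_mul_crossMx (s t : Fin 3 → ℝ) :
    crossMx s * crossMx t = vecMulVec t s - (s ⬝ᵥ t) • 1 := by
  ext i j
  fin_cases i <;> fin_cases j <;>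
    simp [crossMx, mul_apply, Fin.sum_univ_three, vecMulVec, vec3_dotProduct] <;> ring

theorem eq_zero_of_cross_eq_zero_of_dotProduct_eq_zero {R : Type*} [CommRing R] [LinearOrder R]
    [IsStrictOrderedRing R] {d t : Fin 3 → R} (ht : t ≠ 0) (hcross : d ⨯₃ t = 0)
    (hdot : d ⬝ᵥ t = 0) : d = 0 := by
  have h := cross_dot_cross d t d t
  rw [hcross, hdot, zero_dotProduct, zero_mul, sub_zero, eq_comm] at h
  rcases mul_eq_zero.mp h with hd | ht'
  · exact dotProduct_self_eq_zero.mp hd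
  · exact absurd (dotProduct_self_eq_zero.mp ht') ht

theorem eq_zero_of_crossMx_mul_crossMx_add_crossMx_eq_zero {s t d : Fin 3 → ℝ} (ht : t ≠ 0)
    (hdot : d ⬝ᵥ t = 0) (h : crossMx s * crossMx t + crossMx d = 0) : s = 0 ∧ d = 0 := by
  rw [crossMx_mul_crossMx] at h
  have hst : s ⬝ᵥ t = 0 := by
    have htr := congrArg trace h
    simp only [trace_add, trace_sub, trace_vecMulVec, trace_smul, trace_one, Fintype.card_fin,
      trace_crossMx, trace_zero, dotProduct_comm t s, smul_eq_mul, Nat.cast_ofNat] at htr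
    linarith
  rw [hst, zero_smul, sub_zero] at h
  have hmul (a : Fin 3 → ℝ) : (s ⬝ᵥ a) • t + d ⨯₃ a = 0 := by
    simpa [add_mulVec, vecMulVec_mulVec, crossMx_mulVec] using congrArg (· *ᵥ a) h
  have hd : d = 0 :=
    eq_zero_of_cross_eq_zero_of_dotProduct_eq_zero ht (by simpa [hst] using hmul t) hdot
  refine ⟨?_, hd⟩
  have hs := hmul s
  rw [hd, map_zero, LinearMap.zero_apply, add_zero, smul_eq_zero] at hs
  exact dotProduct_self_eq_zero.mp (hs.resolve_right ht)

/-- If `R` is a 3×3 orthogonal matrix, `t` a unit vector in `ℝ³`, and `s, δt ∈ ℝ³` satisfy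
`⟨t, δt⟩ = 0` and `R[s]×[t]× + R[δt]× = 0`, then `s = 0` and `δt = 0`.  (Injectivity of the
differential of `(R,t) ↦ R[t]×`, i.e. this map is a submersion onto the essential variety.) -/
theorem essential_param_differential_injective
    (R : Matrix (Fin 3) (Fin 3) ℝ) (hR : Rᵀ * R = 1)
    (t : EuclideanSpace ℝ (Fin 3)) (ht : ‖t‖ = 1)
    (s δt : EuclideanSpace ℝ (Fin 3)) (horth : ⟪t, δt⟫ = 0)
    (heq : R * (crossMx s * crossMx t) + R * crossMx δt = 0) :
    s = 0 ∧ δt = 0 := by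
  have h : crossMx s * crossMx t + crossMx δt = 0 := by
    have h := congrArg (Rᵀ * ·) heq
    rwa [← Matrix.mul_add, ← Matrix.mul_assoc, hR, Matrix.one_mul, Matrix.mul_zero] at h
  have ht0 : t.ofLp ≠ 0 := by
    rw [Ne, WithLp.ofLp_eq_zero, ← norm_eq_zero, ht]
    exact one_ne_zero
  have hdot : δt.ofLp ⬝ᵥ t.ofLp = 0 := by
    simpa [EuclideanSpace.inner_eq_star_dotProduct] using horth
  obtain ⟨hs, hd⟩ := eq_zero_of_crossMx_mul_crossMx_add_crossMx_eq_zero ht0 hdot h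
  simpa using And.intro hs hd
end

section
/- Let b ∈ ℝ⁷ be such that rank M(b) = 3. Then the derivative at b of the polynomial map ℝ⁷ → ℝ^{3×3}, b ↦ F(b), is an injective linear map ℝ⁷ → ℝ^{3×3}. (Thus the parameterization b ↦ F(b) of fundamental matrices is a submersion where it is defined.) -/
/-!
`F` is quadratic in `b`, so `D v` is the coefficient of `t` in `F (b + t • v)`, which is explicit.
If it vanishes (indices from 0, as in the code), its first two rows give
`v 0 = v 1 = v 3 = v 4 = v 5 = 0`, its `(2, 0)` entry gives `v 6 = v 2 * b 3`, and the other two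
entries of the last row then read `v 2 * (b 0 * b 3 - b 4) = v 2 * (b 1 * b 3 - b 5) = 0`.
But `(0, b 4 - b 0 * b 3, b 5 - b 1 * b 3, 0) = row 1 - b 3 • row 0 - (b 6 - b 2 * b 3) • row 2`
for the rows of `M(b)`, which are independent, so `v 2 = 0` and hence `v 6 = 0`.
-/

open Matrix

attribute [local instance] Matrix.normedAddCommGroup Matrix.normedSpace

/-- The 3×4 camera matrix `M(b)` with rows `(1, b₁, b₂, b₃)`, `(b₄, b₅, b₆, b₇)`,
`(0, 0, 0, 1)`. -/
def Mcam (b : Fin 7 → ℝ) : Matrix (Fin 3) (Fin 4) ℝ :=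
  !![1, b 0, b 1, b 2; b 3, b 4, b 5, b 6; 0, 0, 0, 1]

/-- The fundamental matrix `F(b)` with rows `(b₄, b₅, b₆)`, `(−1, −b₁, −b₂)`,
`(−b₃b₄+b₇, −b₃b₅+b₁b₇, −b₃b₆+b₂b₇)`. -/
def Fmat (b : Fin 7 → ℝ) : Matrix (Fin 3) (Fin 3) ℝ :=
  !![b 3, b 4, b 5;
     -1, -(b 0), -(b 1);
     -(b 2) * b 3 + b 6, -(b 2) * b 4 + b 0 * b 6, -(b 2) * b 5 + b 1 * b 6]

theorem Matrix.linearIndependent_row_of_rank_eq_card {K m n : Type*} [Field K] [Fintype m]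
    [Fintype n] {A : Matrix m n K} (h : A.rank = Fintype.card m) : LinearIndependent K A.row := by
  rw [linearIndependent_iff_card_eq_finrank_span, ← h, A.rank_eq_finrank_span_row, Set.finrank]

theorem ne_or_ne_of_Mcam_rank_eq_three (b : Fin 7 → ℝ) (h : (Mcam b).rank = 3) :
    b 4 ≠ b 0 * b 3 ∨ b 5 ≠ b 1 * b 3 := by
  by_contra! hb
  have hind := linearIndependent_row_of_rank_eq_card (A := Mcam b) (by simpa using h)
  have hrel : ∑ i, ![-b 3, 1, b 2 * b 3 - b 6] i • (Mcam b).row i = 0 := by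
    ext j
    fin_cases j <;> simp [Fin.sum_univ_three, Mcam, hb.1, hb.2] <;> ring
  simpa using Fintype.linearIndependent_iff.mp hind _ hrel 1

section QuadraticAlongLine

variable {𝕜 E F : Type*} [NontriviallyNormedField 𝕜] [NormedAddCommGroup E] [NormedSpace 𝕜 E]
  [NormedAddCommGroup F] [NormedSpace 𝕜 F]

theorem hasDerivAt_add_smul_add_sq_smul (A B C : F) :
    HasDerivAt (fun t : 𝕜 => A + t • B + t ^ 2 • C) B 0 := by
  convert (((hasDerivAt_id (0 : 𝕜)).smul_const B).const_add A).fun_add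
    ((hasDerivAt_pow 2 (0 : 𝕜)).smul_const C) using 1 <;> simp

theorem HasFDerivAt.apply_eq_of_forall_add_smul {f : E → F} {f' : E →L[𝕜] F} {x v : E} {B C : F}
    (hf : HasFDerivAt f f' x) (h : ∀ t : 𝕜, f (x + t • v) = f x + t • B + t ^ 2 • C) :
    f' v = B :=
  (hf.hasLineDerivAt v).unique <| by
    simpa only [HasLineDerivAt, h] using hasDerivAt_add_smul_add_sq_smul (f x) B C

end QuadraticAlongLine

def FmatDeriv (b v : Fin 7 → ℝ) : Matrix (Fin 3) (Fin 3) ℝ :=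
  !![v 3, v 4, v 5;
     0, -(v 0), -(v 1);
     -(b 2) * v 3 - v 2 * b 3 + v 6, -(b 2) * v 4 - v 2 * b 4 + b 0 * v 6 + v 0 * b 6,
       -(b 2) * v 5 - v 2 * b 5 + b 1 * v 6 + v 1 * b 6]

theorem Fmat_add_smul (b v : Fin 7 → ℝ) (t : ℝ) :
    Fmat (b + t • v) = Fmat b + t • FmatDeriv b v +
      t ^ 2 • !![0, 0, 0;
                 0, 0, 0;
                 -(v 2) * v 3, -(v 2) * v 4 + v 0 * v 6, -(v 2) * v 5 + v 1 * v 6] := by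
  ext i j
  fin_cases i <;> fin_cases j <;> simp [Fmat, FmatDeriv] <;> ring

theorem eq_zero_of_FmatDeriv_eq_zero {b v : Fin 7 → ℝ} (hb : b 4 ≠ b 0 * b 3 ∨ b 5 ≠ b 1 * b 3)
    (hv : FmatDeriv b v = 0) : v = 0 := by
  have e := Matrix.ext_iff.mpr hv
  have h3 := e 0 0; have h4 := e 0 1; have h5 := e 0 2; have h0 := e 1 1; have h1 := e 1 2
  have h20 := e 2 0; have h21 := e 2 1; have h22 := e 2 2
  simp only [FmatDeriv, Fin.isValue, neg_mul, of_apply, cons_val', cons_val_zero, cons_val_fin_one,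
    Matrix.zero_apply, cons_val_one, cons_val, neg_eq_zero] at h3 h4 h5 h0 h1 h20 h21 h22
  have h6 : v 6 = v 2 * b 3 := by linear_combination h20 + b 2 * h3
  have h2 : v 2 = 0 := by
    rcases hb with hb | hb
    · have : v 2 * (b 0 * b 3 - b 4) = 0 := by
        linear_combination h21 + b 2 * h4 - b 0 * h6 - b 6 * h0
      exact (mul_eq_zero.mp this).resolve_right (sub_ne_zero.mpr hb.symm)
    · have : v 2 * (b 1 * b 3 - b 5) = 0 := by
        linear_combination h22 + b 2 * h5 - b 1 * h6 - b 6 * h1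
      exact (mul_eq_zero.mp this).resolve_right (sub_ne_zero.mpr hb.symm)
  ext k
  fin_cases k <;> simp [h0, h1, h2, h3, h4, h5, h6]

/-- If `rank M(b) = 3`, then the derivative at `b` of the polynomial map `b ↦ F(b)`
is an injective linear map `ℝ⁷ → ℝ^{3×3}`; thus the parameterization `b ↦ F(b)` of
fundamental matrices is a submersion where it is defined. -/
theorem Fmat_derivative_injective
    (b : Fin 7 → ℝ) (hrank : (Mcam b).rank = 3)
    (D : (Fin 7 → ℝ) →L[ℝ] Matrix (Fin 3) (Fin 3) ℝ)
    (hD : HasFDerivAt Fmat D b) :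
    Function.Injective D :=
  (injective_iff_map_eq_zero D).mpr fun v hv =>
    eq_zero_of_FmatDeriv_eq_zero (ne_or_ne_of_Mcam_rank_eq_three b hrank) <|
      (hD.apply_eq_of_forall_add_smul (Fmat_add_smul b v)).symm.trans hv
end

section
/- For every b ∈ ℝ⁷, the third row of F(b) equals −b₃ times the first row plus −b₇ times the second row; in particular rank F(b) ≤ 2. Moreover, rank F(b) = 2 if and only if rank M(b) = 3. -/
open Matrix

lemma aux_rank_le {m n k : ℕ} (A : Matrix (Fin m) (Fin n) ℝ) (C : Matrix (Fin m) (Fin k) ℝ)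
    (D : Matrix (Fin k) (Fin n) ℝ) (h : A = C * D) : A.rank ≤ k := by
  rw [h]
  exact (Matrix.rank_mul_le_right C D).trans (Matrix.rank_le_card_height D |>.trans (by simp))

lemma aux_rank_ge {m n k : ℕ} (A : Matrix (Fin m) (Fin n) ℝ) (P : Matrix (Fin k) (Fin m) ℝ)
    (Q : Matrix (Fin n) (Fin k) ℝ) (h : IsUnit (P * A * Q).det) : k ≤ A.rank := by
  have h1 : (P * A * Q).rank = k := by
    rw [Matrix.rank_of_isUnit _ ((Matrix.isUnit_iff_isUnit_det _).mpr h)]; simp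
  calc k = (P * A * Q).rank := h1.symm
    _ ≤ (A * Q).rank := by rw [Matrix.mul_assoc]; exact Matrix.rank_mul_le_right _ _
    _ ≤ A.rank := Matrix.rank_mul_le_left _ _

/-- The third row of `F(b)` is `−b₃` times the first row plus `−b₇` times the second row;
in particular `rank F(b) ≤ 2`.  Moreover `rank F(b) = 2` iff `rank M(b) = 3`. -/
theorem Fmat_row_relation_and_rank (b : Fin 7 → ℝ) :
    (∀ j : Fin 3, Fmat b 2 j = -(b 2) * Fmat b 0 j + -(b 6) * Fmat b 1 j) ∧
    (Fmat b).rank ≤ 2 ∧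
    ((Fmat b).rank = 2 ↔ (Mcam b).rank = 3) := by
  have hle : (Fmat b).rank ≤ 2 := by
    apply aux_rank_le _ !![(1:ℝ),0; 0,1; -(b 2), -(b 6)] !![b 3, b 4, b 5; -1, -(b 0), -(b 1)]
    ext i j
    fin_cases i <;> fin_cases j <;>
      simp [Fmat, Matrix.mul_apply, Fin.sum_univ_succ] <;> ring
  refine ⟨fun j => by fin_cases j <;> simp [Fmat] <;> ring, hle, ?_⟩
  by_cases h4 : b 4 = b 3 * b 0
  · by_cases h5 : b 5 = b 3 * b 1
    · -- degenerate: rank F ≤ 1, rank M ≤ 2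
      have hF1 : (Fmat b).rank ≤ 1 := by
        apply aux_rank_le _ !![-(b 3); (1:ℝ); b 2 * b 3 - b 6] !![-1, -(b 0), -(b 1)]
        ext i j
        fin_cases i <;> fin_cases j <;>
          simp [Fmat, Matrix.mul_apply, Fin.sum_univ_succ, h4, h5] <;> ring
      have hM2 : (Mcam b).rank ≤ 2 := by
        apply aux_rank_le _ !![(1:ℝ),0; b 3, b 6 - b 3 * b 2; 0,1] !![1, b 0, b 1, b 2; 0,0,0,1]
        ext i j
        fin_cases i <;> fin_cases j <;>
          simp [Mcam, Matrix.mul_apply, Fin.sum_univ_succ, h4, h5] <;> ring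
      constructor
      · intro h; omega
      · intro h; omega
    · -- b 5 ≠ b 3 * b 1 : use columns 0,2
      have hFge : 2 ≤ (Fmat b).rank := by
        apply aux_rank_ge _ !![(1:ℝ),0,0; 0,1,0] !![(1:ℝ),0; 0,0; 0,1]
        have : !![(1:ℝ),0,0; 0,1,0] * Fmat b * !![(1:ℝ),0; 0,0; 0,1] =
            !![b 3, b 5; -1, -(b 1)] := by
          ext i j
          fin_cases i <;> fin_cases j <;>
            simp [Fmat, Matrix.mul_apply, Fin.sum_univ_succ]
        rw [this, Matrix.det_fin_two_of]
        simp only [isUnit_iff_ne_zero]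
        intro hc; apply h5; nlinarith [hc]
      have hMge : 3 ≤ (Mcam b).rank := by
        apply aux_rank_ge _ (1 : Matrix (Fin 3) (Fin 3) ℝ) !![(1:ℝ),0,0; 0,0,0; 0,1,0; 0,0,1]
        have : (1 : Matrix (Fin 3) (Fin 3) ℝ) * Mcam b * !![(1:ℝ),0,0; 0,0,0; 0,1,0; 0,0,1] =
            !![1, b 1, b 2; b 3, b 5, b 6; 0, 0, 1] := by
          rw [Matrix.one_mul]
          ext i j
          fin_cases i <;> fin_cases j <;>
            simp [Mcam, Matrix.mul_apply, Fin.sum_univ_succ]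
        rw [this, Matrix.det_fin_three]
        simp only [isUnit_iff_ne_zero]
        intro hc; simp at hc; apply h5; nlinarith [hc]
      have hM3 : (Mcam b).rank ≤ 3 := (Matrix.rank_le_card_height _).trans (by simp)
      constructor <;> intro _ <;> omega
  · -- b 4 ≠ b 3 * b 0 : use columns 0,1
    have hFge : 2 ≤ (Fmat b).rank := by
      apply aux_rank_ge _ !![(1:ℝ),0,0; 0,1,0] !![(1:ℝ),0; 0,1; 0,0]
      have : !![(1:ℝ),0,0; 0,1,0] * Fmat b * !![(1:ℝ),0; 0,1; 0,0] =
          !![b 3, b 4; -1, -(b 0)] := by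
        ext i j
        fin_cases i <;> fin_cases j <;>
          simp [Fmat, Matrix.mul_apply, Fin.sum_univ_succ]
      rw [this, Matrix.det_fin_two_of]
      simp only [isUnit_iff_ne_zero]
      intro hc; apply h4; nlinarith [hc]
    have hMge : 3 ≤ (Mcam b).rank := by
      apply aux_rank_ge _ (1 : Matrix (Fin 3) (Fin 3) ℝ) !![(1:ℝ),0,0; 0,1,0; 0,0,0; 0,0,1]
      have : (1 : Matrix (Fin 3) (Fin 3) ℝ) * Mcam b * !![(1:ℝ),0,0; 0,1,0; 0,0,0; 0,0,1] =
          !![1, b 0, b 2; b 3, b 4, b 6; 0, 0, 1] := by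
        rw [Matrix.one_mul]
        ext i j
        fin_cases i <;> fin_cases j <;>
          simp [Mcam, Matrix.mul_apply, Fin.sum_univ_succ]
      rw [this, Matrix.det_fin_three]
      simp only [isUnit_iff_ne_zero]
      intro hc; simp at hc; apply h4; nlinarith [hc]
    have hM3 : (Mcam b).rank ≤ 3 := (Matrix.rank_le_card_height _).trans (by simp)
    constructor <;> intro _ <;> omega
end

section
/- Let A, B be 3×4 real matrices of rank 3, let N be the 4×4 matrix whose first three rows are the rows of A and whose fourth row is the third row of B, and assume det N ≠ 0 and that the first row of B times the first column of N⁻¹ is nonzero. Then there exist an invertible 4×4 real matrix g, a vector b ∈ ℝ⁷, and nonzero scalars λ, μ ∈ ℝ such that λ·(A g) = [I₃ 0] (the 3×4 matrix whose left 3×3 block is the identity and last column is zero) and μ·(B g) = M(b). Moreover b is uniquely determined, and any other such tuple (g′, b′, λ′, μ′) satisfies b′ = b and g′ = c·g, λ′ = λ/c, μ′ = μ/c for some nonzero scalar c. (This justifies the normal form ([I 0], M(b)) for almost all pairs of uncalibrated cameras up to a projective world transformation.) -/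
open Matrix

/-- The 3×4 matrix `[I₃ 0]`, whose left 3×3 block is the identity and last column is zero. -/
def Icam : Matrix (Fin 3) (Fin 4) ℝ :=
  !![1, 0, 0, 0; 0, 1, 0, 0; 0, 0, 1, 0]

/-- Normal form for pairs of uncalibrated cameras: if `A, B` are 3×4 real matrices of rank 3,
`N` is the 4×4 matrix whose first three rows are those of `A` and whose fourth row is the third
row of `B`, with `det N ≠ 0` and `(first row of B) · (first column of N⁻¹) ≠ 0`, then there are
an invertible `g`, a vector `b ∈ ℝ⁷` and nonzero scalars `λ, μ` with `λ•(A*g) = [I 0]` and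
`μ•(B*g) = M(b)`; moreover `b` is unique, and any other such tuple differs from `(g, λ, μ)`
by a nonzero scalar `c` as `g' = c•g`, `λ' = λ/c`, `μ' = μ/c`. -/
theorem camera_pair_normal_form
    (A B : Matrix (Fin 3) (Fin 4) ℝ) (hA : A.rank = 3) (hB : B.rank = 3)
    (N : Matrix (Fin 4) (Fin 4) ℝ)
    (hN₁ : ∀ (i : Fin 3) (j : Fin 4), N i.castSucc j = A i j)
    (hN₂ : ∀ j : Fin 4, N 3 j = B 2 j)
    (hdet : N.det ≠ 0)
    (hcol : ∑ j : Fin 4, B 0 j * N⁻¹ j 0 ≠ 0) :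
    ∃ (g : Matrix (Fin 4) (Fin 4) ℝ) (b : Fin 7 → ℝ) (lam mu : ℝ),
      IsUnit g ∧ lam ≠ 0 ∧ mu ≠ 0 ∧
      lam • (A * g) = Icam ∧ mu • (B * g) = Mcam b ∧
      ∀ (g' : Matrix (Fin 4) (Fin 4) ℝ) (b' : Fin 7 → ℝ) (lam' mu' : ℝ),
        IsUnit g' → lam' ≠ 0 → mu' ≠ 0 →
        lam' • (A * g') = Icam → mu' • (B * g') = Mcam b' →
        b' = b ∧ ∃ c : ℝ, c ≠ 0 ∧ g' = c • g ∧ lam' = lam / c ∧ mu' = mu / c := by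
  have hu : IsUnit N.det := isUnit_iff_ne_zero.mpr hdet
  have hinv : N * N⁻¹ = 1 := Matrix.mul_nonsing_inv N hu
  have hinv' : N⁻¹ * N = 1 := Matrix.nonsing_inv_mul N hu
  set C : Matrix (Fin 3) (Fin 4) ℝ := B * N⁻¹ with hC
  set s : ℝ := C 0 0 with hsdef
  have hs : s ≠ 0 := by
    have h : C 0 0 = ∑ j : Fin 4, B 0 j * N⁻¹ j 0 := by
      simp [hC, Matrix.mul_apply]
    rw [hsdef, h]; exact hcol
  have hN0 : ∀ j, N 0 j = A 0 j := fun j => hN₁ 0 j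
  have hN1 : ∀ j, N 1 j = A 1 j := fun j => hN₁ 1 j
  have hN2 : ∀ j, N 2 j = A 2 j := fun j => hN₁ 2 j
  have hAN : ∀ (i : Fin 3) (j : Fin 4),
      (A * N⁻¹) i j = (1 : Matrix (Fin 4) (Fin 4) ℝ) i.castSucc j := by
    intro i j
    rw [← hinv]
    simp only [Matrix.mul_apply]
    exact (Finset.sum_congr rfl fun k _ => by rw [hN₁]).symm
  have hBN : ∀ j : Fin 4, C 2 j = (1 : Matrix (Fin 4) (Fin 4) ℝ) 3 j := by
    intro j
    rw [hC, ← hinv]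
    simp only [Matrix.mul_apply]
    exact (Finset.sum_congr rfl fun k _ => by rw [hN₂]).symm
  set d : Fin 4 → ℝ := ![1, 1, 1, s] with hd
  set g : Matrix (Fin 4) (Fin 4) ℝ := N⁻¹ * Matrix.diagonal d with hg
  have hAg : ∀ i j, (A * g) i j = (1 : Matrix (Fin 4) (Fin 4) ℝ) i.castSucc j * d j := by
    intro i j
    rw [hg, ← Matrix.mul_assoc, Matrix.mul_diagonal, hAN]
  have hBg : ∀ i j, (B * g) i j = C i j * d j := by
    intro i j
    rw [hg, ← Matrix.mul_assoc, ← hC, Matrix.mul_diagonal]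
  have hgu : IsUnit g := by
    rw [Matrix.isUnit_iff_isUnit_det, hg, Matrix.det_mul, Matrix.det_nonsing_inv,
      Matrix.det_diagonal, isUnit_iff_ne_zero]
    refine mul_ne_zero ?_ (by simp [hd, Fin.prod_univ_four, hs])
    simpa [Ring.inverse_eq_inv'] using inv_ne_zero hdet
  set b : Fin 7 → ℝ := ![C 0 1 / s, C 0 2 / s, C 0 3, C 1 0 / s, C 1 1 / s, C 1 2 / s, C 1 3]
    with hb
  have key1 : (1 : ℝ) • (A * g) = Icam := by
    ext i j
    rw [Matrix.smul_apply, one_smul, hAg]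
    fin_cases i <;> fin_cases j <;>
      simp [Icam, hd, Matrix.one_apply, Fin.ext_iff, Matrix.vecHead, Matrix.vecTail] <;>
      first
        | rfl
        | (intro h; exact absurd h (by decide))
  have hb0 : b 0 = C 0 1 / s := rfl
  have hb1 : b 1 = C 0 2 / s := rfl
  have hb2 : b 2 = C 0 3 := rfl
  have hb3 : b 3 = C 1 0 / s := rfl
  have hb4 : b 4 = C 1 1 / s := rfl
  have hb5 : b 5 = C 1 2 / s := rfl
  have hb6 : b 6 = C 1 3 := rfl
  have key2 : s⁻¹ • (B * g) = Mcam b := by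
    ext i j
    rw [Matrix.smul_apply, hBg]
    fin_cases i <;> fin_cases j <;>
      simp [Mcam, hb0, hb1, hb2, hb3, hb4, hb5, hb6, hd, hBN, Matrix.one_apply, Fin.ext_iff,
        ← hsdef, Matrix.vecHead, Matrix.vecTail] <;>
      first
        | rfl
        | field_simp
        | (intro h; exact absurd h (by decide))
  refine ⟨g, b, 1, s⁻¹, hgu, one_ne_zero, inv_ne_zero hs, key1, key2, ?_⟩
  intro g' b' lam' mu' hgu' hl' hm' hA' hB'
  have hAg' : A * g' = lam'⁻¹ • Icam := by
    rw [← hA', smul_smul, inv_mul_cancel₀ hl', one_smul]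
  have hBg'' : B * g' = mu'⁻¹ • Mcam b' := by
    rw [← hB', smul_smul, inv_mul_cancel₀ hm', one_smul]
  set d' : Fin 4 → ℝ := ![lam'⁻¹, lam'⁻¹, lam'⁻¹, mu'⁻¹] with hd'
  have hNg' : N * g' = Matrix.diagonal d' := by
    have e0 : ∀ j, (N * g') 0 j = (A * g') 0 j := by
      intro j; simp only [Matrix.mul_apply]
      exact Finset.sum_congr rfl fun k _ => by rw [hN0]
    have e1 : ∀ j, (N * g') 1 j = (A * g') 1 j := by
      intro j; simp only [Matrix.mul_apply]
      exact Finset.sum_congr rfl fun k _ => by rw [hN1]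
    have e2 : ∀ j, (N * g') 2 j = (A * g') 2 j := by
      intro j; simp only [Matrix.mul_apply]
      exact Finset.sum_congr rfl fun k _ => by rw [hN2]
    have e3 : ∀ j, (N * g') 3 j = (B * g') 2 j := by
      intro j; simp only [Matrix.mul_apply]
      exact Finset.sum_congr rfl fun k _ => by rw [hN₂]
    ext i j
    fin_cases i
    · show (N * g') 0 j = Matrix.diagonal d' 0 j
      rw [e0 j, hAg', Matrix.smul_apply]
      fin_cases j <;>
        simp [Icam, hd', Matrix.diagonal_apply, Fin.ext_iff, Matrix.vecHead,
          Matrix.vecTail] <;>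
        first | rfl | rw [if_neg (by decide)]
    · show (N * g') 1 j = Matrix.diagonal d' 1 j
      rw [e1 j, hAg', Matrix.smul_apply]
      fin_cases j <;>
        simp [Icam, hd', Matrix.diagonal_apply, Fin.ext_iff, Matrix.vecHead,
          Matrix.vecTail] <;>
        first | rfl | rw [if_neg (by decide)]
    · show (N * g') 2 j = Matrix.diagonal d' 2 j
      rw [e2 j, hAg', Matrix.smul_apply]
      fin_cases j <;>
        simp [Icam, hd', Matrix.diagonal_apply, Fin.ext_iff, Matrix.vecHead,
          Matrix.vecTail] <;>
        first | rfl | rw [if_neg (by decide)]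
    · show (N * g') 3 j = Matrix.diagonal d' 3 j
      rw [e3 j, hBg'', Matrix.smul_apply]
      fin_cases j <;>
        simp [Mcam, hd', Matrix.diagonal_apply, Fin.ext_iff, Matrix.vecHead,
          Matrix.vecTail] <;>
        first | rfl | rw [if_neg (by decide)]
  have hgeq' : g' = N⁻¹ * Matrix.diagonal d' := by
    calc g' = (N⁻¹ * N) * g' := by rw [hinv', Matrix.one_mul]
    _ = N⁻¹ * (N * g') := by rw [Matrix.mul_assoc]
    _ = N⁻¹ * Matrix.diagonal d' := by rw [hNg']
  have hBg2 : ∀ i j, (B * g') i j = C i j * d' j := by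
    intro i j
    rw [hgeq', ← Matrix.mul_assoc, ← hC, Matrix.mul_diagonal]
  have hrel : mu' * (s * lam'⁻¹) = 1 := by
    have h := congrFun (congrFun hB' 0) 0
    rw [Matrix.smul_apply, hBg2] at h
    simpa [Mcam, hd', ← hsdef, smul_eq_mul, mul_comm] using h
  have hml : mu' * lam'⁻¹ = s⁻¹ := by
    field_simp at hrel ⊢
    linarith [hrel]
  have hM : Mcam b' = Mcam b := by
    rw [← hB', ← key2]
    ext i j
    rw [Matrix.smul_apply, Matrix.smul_apply, hBg2, hBg]
    fin_cases j
    · show mu' * (C i 0 * lam'⁻¹) = s⁻¹ * (C i 0 * 1)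
      rw [mul_one, ← mul_assoc, mul_comm mu' (C i 0), mul_assoc, hml, mul_comm]
    · show mu' * (C i 1 * lam'⁻¹) = s⁻¹ * (C i 1 * 1)
      rw [mul_one, ← mul_assoc, mul_comm mu' (C i 1), mul_assoc, hml, mul_comm]
    · show mu' * (C i 2 * lam'⁻¹) = s⁻¹ * (C i 2 * 1)
      rw [mul_one, ← mul_assoc, mul_comm mu' (C i 2), mul_assoc, hml, mul_comm]
    · show mu' * (C i 3 * mu'⁻¹) = s⁻¹ * (C i 3 * s)
      rw [← mul_assoc, mul_comm mu' (C i 3), mul_assoc, mul_inv_cancel₀ hm', mul_one,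
        ← mul_assoc, mul_comm s⁻¹ (C i 3), mul_assoc, inv_mul_cancel₀ hs, mul_one]
  have hb' : b' = b := by
    funext k
    fin_cases k
    · simpa [Mcam] using congrFun (congrFun hM 0) 1
    · simpa [Mcam] using congrFun (congrFun hM 0) 2
    · simpa [Mcam] using congrFun (congrFun hM 0) 3
    · simpa [Mcam] using congrFun (congrFun hM 1) 0
    · simpa [Mcam] using congrFun (congrFun hM 1) 1
    · simpa [Mcam] using congrFun (congrFun hM 1) 2
    · simpa [Mcam] using congrFun (congrFun hM 1) 3
  refine ⟨hb', lam'⁻¹, inv_ne_zero hl', ?_, ?_, ?_⟩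
  · rw [hgeq', hg, ← Matrix.mul_smul]
    congr 1
    ext i j
    rw [Matrix.smul_apply]
    by_cases hij : i = j
    · subst hij
      rw [Matrix.diagonal_apply_eq, Matrix.diagonal_apply_eq, smul_eq_mul]
      fin_cases i
      · show lam'⁻¹ = lam'⁻¹ * (1 : ℝ); rw [mul_one]
      · show lam'⁻¹ = lam'⁻¹ * (1 : ℝ); rw [mul_one]
      · show lam'⁻¹ = lam'⁻¹ * (1 : ℝ); rw [mul_one]
      · show mu'⁻¹ = lam'⁻¹ * s
        rw [inv_eq_of_mul_eq_one_right hrel, mul_comm]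
    · rw [Matrix.diagonal_apply_ne _ hij, Matrix.diagonal_apply_ne _ hij, smul_zero]
  · rw [one_div, inv_inv]
  · have h2 : mu' * s = lam' := by
      field_simp [hl'] at hrel
      linarith
    rw [division_def, inv_inv]
    field_simp [hs]
    linarith
end

section
/- Let X₁,…,X₅ ∈ ℝ³. The following are equivalent: (i) there exists (λ₁,…,λ₅, s₁, s₂, s₃, δt₁, δt₂) ∈ ℝ¹⁰, not all zero, such that for each i = 1,…,5: λᵢ(Xᵢ)₁ − s₃(Xᵢ)₂ + s₂(Xᵢ)₃ − δt₁ = 0 and λᵢ(Xᵢ)₂ + s₃(Xᵢ)₁ − s₁(Xᵢ)₃ − δt₂ = 0; (ii) there exists (s₁, s₂, s₃, δt₁, δt₂) ∈ ℝ⁵, not all zero, such that for each i = 1,…,5: s₃((Xᵢ)₁² + (Xᵢ)₂²) − s₂(Xᵢ)₂(Xᵢ)₃ − s₁(Xᵢ)₁(Xᵢ)₃ + δt₁(Xᵢ)₂ − δt₂(Xᵢ)₁ = 0. (This is the elimination of the scale variables λᵢ in the characterization of ill-posed world scenes for the 5-point problem.) -/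
/-!
The combination `−(Xᵢ)₂ · (first equation) + (Xᵢ)₁ · (second equation)` of the scaled
equations is the scale-free equation, and conversely the scale-free equation says exactly that
`(s₃(Xᵢ)₂ − s₂(Xᵢ)₃ + δt₁, s₁(Xᵢ)₃ − s₃(Xᵢ)₁ + δt₂)` is parallel to `((Xᵢ)₁, (Xᵢ)₂)`, so it
determines `λᵢ` whenever `((Xᵢ)₁, (Xᵢ)₂) ≠ 0`. A point with `(Xᵢ)₁ = (Xᵢ)₂ = 0` is the degenerate
case on both sides: it carries a nonzero solution `λ = eᵢ` of the scaled system, and it makes its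
own scale-free equation vacuous, leaving four linear equations in five unknowns.
-/

theorem exists_mul_eq_of_mul_eq_mul {K : Type*} [Field K] {a b u v : K}
    (hab : a ≠ 0 ∨ b ≠ 0) (h : a * v = b * u) : ∃ c, c * a = u ∧ c * b = v := by
  rcases hab with ha | hb
  · refine ⟨u / a, div_mul_cancel₀ u ha, ?_⟩
    rw [div_mul_eq_mul_div, div_eq_iff ha]
    linear_combination -h
  · refine ⟨v / b, ?_, div_mul_cancel₀ v hb⟩
    rw [div_mul_eq_mul_div, div_eq_iff hb]
    linear_combination h

theorem Module.Dual.exists_ne_zero_forall_apply_eq_zero {K V ι : Type*} [Field K]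
    [AddCommGroup V] [Module K V] [FiniteDimensional K V] [Fintype ι]
    (f : ι → Module.Dual K V) (hcard : Fintype.card ι < Module.finrank K V) :
    ∃ v ≠ 0, ∀ i, f i v = 0 := by
  have hker : LinearMap.ker (LinearMap.pi f) ≠ ⊥ :=
    LinearMap.ker_ne_bot_of_finrank_lt (by rwa [Module.finrank_fintype_fun_eq_card])
  obtain ⟨v, hv, hne⟩ := (Submodule.ne_bot_iff _).mp hker
  exact ⟨v, hne, fun i => congrFun (LinearMap.mem_ker.mp hv) i⟩

def scaleFreeForm (x : Fin 3 → ℝ) : Module.Dual ℝ ((Fin 3 → ℝ) × ℝ × ℝ) where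
  toFun p := p.1 2 * (x 0 ^ 2 + x 1 ^ 2) - p.1 1 * x 1 * x 2 - p.1 0 * x 0 * x 2 +
    p.2.1 * x 1 - p.2.2 * x 0
  map_add' p q := by
    simp only [Prod.fst_add, Prod.snd_add, Pi.add_apply]
    ring
  map_smul' c p := by
    simp only [Prod.smul_fst, Prod.smul_snd, Pi.smul_apply, smul_eq_mul, RingHom.id_apply]
    ring

theorem scaleFreeForm_apply (x s : Fin 3 → ℝ) (dt1 dt2 : ℝ) :
    scaleFreeForm x (s, dt1, dt2) = s 2 * (x 0 ^ 2 + x 1 ^ 2) - s 1 * x 1 * x 2 -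
      s 0 * x 0 * x 2 + dt1 * x 1 - dt2 * x 0 :=
  rfl

theorem scaleFreeForm_eq_zero_of_scaled {x s : Fin 3 → ℝ} {lam dt1 dt2 : ℝ}
    (h₁ : lam * x 0 - s 2 * x 1 + s 1 * x 2 - dt1 = 0)
    (h₂ : lam * x 1 + s 2 * x 0 - s 0 * x 2 - dt2 = 0) :
    scaleFreeForm x (s, dt1, dt2) = 0 := by
  rw [scaleFreeForm_apply]
  linear_combination (-x 1) * h₁ + x 0 * h₂

theorem exists_scaled_of_scaleFreeForm_eq_zero {x s : Fin 3 → ℝ} {dt1 dt2 : ℝ}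
    (hx : x 0 ≠ 0 ∨ x 1 ≠ 0) (h : scaleFreeForm x (s, dt1, dt2) = 0) :
    ∃ lam : ℝ, lam * x 0 - s 2 * x 1 + s 1 * x 2 - dt1 = 0 ∧
      lam * x 1 + s 2 * x 0 - s 0 * x 2 - dt2 = 0 := by
  rw [scaleFreeForm_apply] at h
  obtain ⟨lam, h₁, h₂⟩ := exists_mul_eq_of_mul_eq_mul hx
    (u := s 2 * x 1 - s 1 * x 2 + dt1) (v := s 0 * x 2 - s 2 * x 0 + dt2)
    (by linear_combination -h)
  exact ⟨lam, by linear_combination h₁, by linear_combination h₂⟩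

theorem exists_ne_zero_forall_scaleFreeForm_eq_zero {ι : Type*} [Fintype ι] [DecidableEq ι]
    (hcard : Fintype.card ι ≤ 5) (X : ι → Fin 3 → ℝ) {i₀ : ι}
    (h₀ : X i₀ 0 = 0) (h₁ : X i₀ 1 = 0) :
    ∃ p ≠ 0, ∀ i, scaleFreeForm (X i) p = 0 := by
  obtain ⟨p, hp, hrest⟩ := Module.Dual.exists_ne_zero_forall_apply_eq_zero
    (fun i : {i // i ≠ i₀} => scaleFreeForm (X i)) (by
      simp only [ne_eq, Fintype.card_subtype_compl, Fintype.card_unique, Module.finrank_prod,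
        Module.finrank_fintype_fun_eq_card, Fintype.card_fin, Module.finrank_self]
      lia)
  refine ⟨p, hp, fun i => ?_⟩
  by_cases hi : i = i₀
  · subst hi
    simp [scaleFreeForm, h₀, h₁]
  · exact hrest ⟨i, hi⟩

/-- Elimination of the scale variables `λᵢ` in the characterization of ill-posed world
scenes for the 5-point problem: for points `X₁, …, X₅ ∈ ℝ³`, the system
`λᵢ(Xᵢ)₁ − s₃(Xᵢ)₂ + s₂(Xᵢ)₃ − δt₁ = 0`, `λᵢ(Xᵢ)₂ + s₃(Xᵢ)₁ − s₁(Xᵢ)₃ − δt₂ = 0`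
has a nonzero solution `(λ, s, δt) ∈ ℝ¹⁰` iff the system
`s₃((Xᵢ)₁² + (Xᵢ)₂²) − s₂(Xᵢ)₂(Xᵢ)₃ − s₁(Xᵢ)₁(Xᵢ)₃ + δt₁(Xᵢ)₂ − δt₂(Xᵢ)₁ = 0`
has a nonzero solution `(s, δt) ∈ ℝ⁵`. -/
theorem eliminate_scales_five_point (X : Fin 5 → Fin 3 → ℝ) :
    (∃ (lam : Fin 5 → ℝ) (s : Fin 3 → ℝ) (dt1 dt2 : ℝ),
        ¬(lam = 0 ∧ s = 0 ∧ dt1 = 0 ∧ dt2 = 0) ∧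
        ∀ i : Fin 5,
          lam i * X i 0 - s 2 * X i 1 + s 1 * X i 2 - dt1 = 0 ∧
          lam i * X i 1 + s 2 * X i 0 - s 0 * X i 2 - dt2 = 0) ↔
    (∃ (s : Fin 3 → ℝ) (dt1 dt2 : ℝ),
        ¬(s = 0 ∧ dt1 = 0 ∧ dt2 = 0) ∧
        ∀ i : Fin 5,
          s 2 * (X i 0 ^ 2 + X i 1 ^ 2) - s 1 * X i 1 * X i 2 - s 0 * X i 0 * X i 2 +
            dt1 * X i 1 - dt2 * X i 0 = 0) := by
  constructor
  · rintro ⟨lam, s, dt1, dt2, hne, h⟩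
    by_cases hsdt : s = 0 ∧ dt1 = 0 ∧ dt2 = 0
    · obtain ⟨rfl, rfl, rfl⟩ := hsdt
      obtain ⟨i₀, hi₀ : lam i₀ ≠ 0⟩ := Function.ne_iff.mp fun hlam => hne ⟨hlam, rfl, rfl, rfl⟩
      have h₀ : X i₀ 0 = 0 := by simpa [hi₀] using (h i₀).1
      have h₁ : X i₀ 1 = 0 := by simpa [hi₀] using (h i₀).2
      obtain ⟨⟨s, dt1, dt2⟩, hp, hform⟩ :=
        exists_ne_zero_forall_scaleFreeForm_eq_zero (by simp) X h₀ h₁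
      exact ⟨s, dt1, dt2, by simpa [Prod.ext_iff] using hp, hform⟩
    · exact ⟨s, dt1, dt2, hsdt, fun i => scaleFreeForm_eq_zero_of_scaled (h i).1 (h i).2⟩
  · rintro ⟨s, dt1, dt2, hne, h⟩
    by_cases hdeg : ∃ i₀, X i₀ 0 = 0 ∧ X i₀ 1 = 0
    · obtain ⟨i₀, h₀, h₁⟩ := hdeg
      refine ⟨Pi.single i₀ 1, 0, 0, 0, fun hlam => by simpa using congrFun hlam.1 i₀,
        fun i => ?_⟩
      rcases eq_or_ne i i₀ with rfl | hi
      · simp [h₀, h₁]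
      · simp [hi]
    · simp only [not_exists, not_and_or] at hdeg
      choose lam hlam using fun i => exists_scaled_of_scaleFreeForm_eq_zero (hdeg i) (h i)
      exact ⟨lam, s, dt1, dt2, fun hzero => hne hzero.2, hlam⟩
end

section
/- Let b ∈ ℝ⁷, set r₁ := (1, b₁, b₂) and r₂ := (b₄, b₅, b₆) in ℝ³, and let X₁,…,X₇ ∈ ℝ³. The following are equivalent: (i) there exists (λ₁,…,λ₇, δb₁,…,δb₇) ∈ ℝ¹⁴, not all zero, such that for each i = 1,…,7: λᵢ⟨r₁, Xᵢ⟩ + δb₁(Xᵢ)₂ + δb₂(Xᵢ)₃ + δb₃ = 0 and λᵢ⟨r₂, Xᵢ⟩ + δb₄(Xᵢ)₁ + δb₅(Xᵢ)₂ + δb₆(Xᵢ)₃ + δb₇ = 0; (ii) there exists (δb₁,…,δb₇) ∈ ℝ⁷, not all zero, such that for each i = 1,…,7: −⟨r₂, Xᵢ⟩·(δb₁(Xᵢ)₂ + δb₂(Xᵢ)₃ + δb₃) + ⟨r₁, Xᵢ⟩·(δb₄(Xᵢ)₁ + δb₅(Xᵢ)₂ + δb₆(Xᵢ)₃ + δb₇)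 = 0. (This is the elimination of the scale variables λᵢ in the characterization of ill-posed world scenes for the 7-point problem.) -/
open Matrix

/-- Elimination of the scale variables `λᵢ` in the characterization of ill-posed world
scenes for the 7-point problem: with `r₁ = (1, b₁, b₂)`, `r₂ = (b₄, b₅, b₆)` and points
`X₁, …, X₇ ∈ ℝ³`, the system
`λᵢ⟨r₁,Xᵢ⟩ + δb₁(Xᵢ)₂ + δb₂(Xᵢ)₃ + δb₃ = 0`,
`λᵢ⟨r₂,Xᵢ⟩ + δb₄(Xᵢ)₁ + δb₅(Xᵢ)₂ + δb₆(Xᵢ)₃ + δb₇ = 0`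
has a nonzero solution `(λ, δb) ∈ ℝ¹⁴` iff the system
`−⟨r₂,Xᵢ⟩(δb₁(Xᵢ)₂ + δb₂(Xᵢ)₃ + δb₃) + ⟨r₁,Xᵢ⟩(δb₄(Xᵢ)₁ + δb₅(Xᵢ)₂ + δb₆(Xᵢ)₃ + δb₇) = 0`
has a nonzero solution `δb ∈ ℝ⁷`. -/
theorem eliminate_scales_seven_point (b : Fin 7 → ℝ) (X : Fin 7 → Fin 3 → ℝ)
    (r₁ r₂ : Fin 3 → ℝ) (hr₁ : r₁ = ![1, b 0, b 1]) (hr₂ : r₂ = ![b 3, b 4, b 5]) :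
    (∃ (lam : Fin 7 → ℝ) (db : Fin 7 → ℝ),
        ¬(lam = 0 ∧ db = 0) ∧
        ∀ i : Fin 7,
          lam i * (r₁ ⬝ᵥ X i) + db 0 * X i 1 + db 1 * X i 2 + db 2 = 0 ∧
          lam i * (r₂ ⬝ᵥ X i) + db 3 * X i 0 + db 4 * X i 1 + db 5 * X i 2 + db 6 = 0) ↔
    (∃ db : Fin 7 → ℝ, db ≠ 0 ∧
        ∀ i : Fin 7,
          -(r₂ ⬝ᵥ X i) * (db 0 * X i 1 + db 1 * X i 2 + db 2) +
            (r₁ ⬝ᵥ X i) * (db 3 * X i 0 + db 4 * X i 1 + db 5 * X i 2 + db 6) = 0) := by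
  constructor
  · rintro ⟨lam, db, hne, h⟩
    by_cases hdb : db = 0
    · -- then lam ≠ 0; some i has both inner products zero
      have hlam : lam ≠ 0 := fun h0 => hne ⟨h0, hdb⟩
      obtain ⟨i, hi⟩ := Function.ne_iff.mp hlam
      replace hi : lam i ≠ 0 := by simpa using hi
      have h1 := (h i).1
      have h2 := (h i).2
      rw [hdb] at h1 h2
      simp only [Pi.zero_apply, zero_mul, add_zero] at h1 h2
      have hr1 : r₁ ⬝ᵥ X i = 0 := by
        rcases mul_eq_zero.mp h1 with h' | h'
        · exact absurd h' hi
        · exact h'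
      have hr2 : r₂ ⬝ᵥ X i = 0 := by
        rcases mul_eq_zero.mp h2 with h' | h'
        · exact absurd h' hi
        · exact h'
      -- linear map whose kernel we seek
      let f : (Fin 7 → ℝ) →ₗ[ℝ] (Fin 7 → ℝ) :=
        { toFun := fun d j =>
            -(r₂ ⬝ᵥ X j) * (d 0 * X j 1 + d 1 * X j 2 + d 2) +
              (r₁ ⬝ᵥ X j) * (d 3 * X j 0 + d 4 * X j 1 + d 5 * X j 2 + d 6)
          map_add' := by intro x y; funext j; simp only [Pi.add_apply]; ring
          map_smul' := by
            intro c x; funext j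
            simp only [Pi.smul_apply, smul_eq_mul, RingHom.id_apply]; ring }
      have hzero : ∀ d : Fin 7 → ℝ, f d i = 0 := by
        intro d
        show -(r₂ ⬝ᵥ X i) * _ + (r₁ ⬝ᵥ X i) * _ = 0
        rw [hr1, hr2]; ring
      have hnsurj : ¬ Function.Surjective f := by
        intro hs
        obtain ⟨d, hd⟩ := hs (Pi.single i 1)
        have h' := congrFun hd i
        rw [hzero d, Pi.single_eq_same] at h'
        exact zero_ne_one h'
      have hninj : ¬ Function.Injective f := by
        intro hinj
        exact hnsurj ((LinearMap.injective_iff_surjective).mp hinj)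
      rw [← LinearMap.ker_eq_bot] at hninj
      obtain ⟨d, hdmem, hdne⟩ := Submodule.exists_mem_ne_zero_of_ne_bot hninj
      refine ⟨d, hdne, fun j => ?_⟩
      exact congrFun (LinearMap.mem_ker.mp hdmem) j
    · refine ⟨db, hdb, fun i => ?_⟩
      have h1 := (h i).1
      have h2 := (h i).2
      linear_combination (-(r₂ ⬝ᵥ X i)) * h1 + (r₁ ⬝ᵥ X i) * h2
  · rintro ⟨db, hdb, h⟩
    by_cases hdeg : ∃ i : Fin 7, r₁ ⬝ᵥ X i = 0 ∧ r₂ ⬝ᵥ X i = 0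
    · obtain ⟨i, hi1, hi2⟩ := hdeg
      refine ⟨Pi.single i 1, 0, ?_, fun j => ?_⟩
      · rintro ⟨hl, -⟩
        have h' := congrFun hl i
        rw [Pi.single_eq_same] at h'
        exact one_ne_zero h'
      · by_cases hji : j = i
        · subst hji
          simp only [Pi.single_eq_same, Pi.zero_apply, hi1, hi2]
          norm_num
        · simp only [Pi.single_apply, hji, if_false, Pi.zero_apply]
          norm_num
    · push_neg at hdeg
      refine ⟨fun i => if r₁ ⬝ᵥ X i = 0 then
          -(db 3 * X i 0 + db 4 * X i 1 + db 5 * X i 2 + db 6) / (r₂ ⬝ᵥ X i)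
        else -(db 0 * X i 1 + db 1 * X i 2 + db 2) / (r₁ ⬝ᵥ X i),
        db, fun hp => hdb hp.2, fun i => ?_⟩
      beta_reduce
      have hc := h i
      set u := r₁ ⬝ᵥ X i with hu
      set v := r₂ ⬝ᵥ X i with hv
      by_cases h1 : u = 0
      · have h2 : v ≠ 0 := hdeg i h1
        rw [if_pos h1, h1]
        have hA0 : db 0 * X i 1 + db 1 * X i 2 + db 2 = 0 := by
          have hvA : -v * (db 0 * X i 1 + db 1 * X i 2 + db 2) = 0 := by
            linear_combination hc - (db 3 * X i 0 + db 4 * X i 1 + db 5 * X i 2 + db 6) * h1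
          rcases mul_eq_zero.mp hvA with h' | h'
          · exact absurd (neg_eq_zero.mp h') h2
          · exact h'
        constructor
        · linear_combination hA0
        · rw [div_mul_cancel₀ _ h2]; ring
      · rw [if_neg h1]
        constructor
        · rw [div_mul_cancel₀ _ h1]; ring
        · rw [div_mul_eq_mul_div]
          field_simp
          linear_combination hc
end

section
/- Let b ∈ ℝ⁷ with rank M(b) = 3. Then the 5×4 real matrix with rows (b₄, 0, 1, 0), (0, b₄, 0, 1), (b₅, 0, b₁, 0), (b₆, b₅, b₂, b₁), (0, b₆, 0, b₂) has trivial kernel (i.e. has rank 4): if (α₁, α₂, α₅, α₆) ∈ ℝ⁴ is mapped to 0 by this matrix, then α₁ = α₂ = α₅ = α₆ = 0. -/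
/-!
Subtracting `b₄` times the first row of `M(b)` from the second leaves `(0, u, v, b₇ - b₄ b₃)` with
`u = b₅ - b₁ b₄` and `v = b₆ - b₂ b₄`; if `u = v = 0` this is a multiple of the last row, so
rank 3 forces `(u, v) ≠ 0`. On the kernel of the 5×4 matrix the first two equations give
`α₅ = -b₄ α₁`, `α₆ = -b₄ α₂`, and the remaining three then say that
`(α₁ + α₂ X)(u + v X) = 0`, which forces `α₁ = α₂ = 0` because `u + v X ≠ 0`.
-/

open Matrix

lemma eq_zero_of_linear_mul_eq_zero {R : Type*} [CommRing R] [NoZeroDivisors R]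
    {u v a₀ a₁ : R} (huv : u ≠ 0 ∨ v ≠ 0)
    (h₀ : u * a₀ = 0) (h₁ : v * a₀ + u * a₁ = 0) (h₂ : v * a₁ = 0) :
    a₀ = 0 ∧ a₁ = 0 := by
  rcases huv with hu | hv
  · have ha₀ : a₀ = 0 := (mul_eq_zero.mp h₀).resolve_left hu
    subst ha₀
    exact ⟨rfl, (mul_eq_zero.mp (by simpa using h₁)).resolve_left hu⟩
  · have ha₁ : a₁ = 0 := (mul_eq_zero.mp h₂).resolve_left hv
    subst ha₁
    exact ⟨(mul_eq_zero.mp (by simpa using h₁)).resolve_left hv, rfl⟩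

lemma Mcam_eq_mul_of_degenerate {b : Fin 7 → ℝ} (hu : b 4 = b 0 * b 3) (hv : b 5 = b 1 * b 3) :
    Mcam b = !![1, 0; b 3, b 6 - b 3 * b 2; 0, 1] * !![1, b 0, b 1, b 2; 0, 0, 0, 1] := by
  ext i j
  fin_cases i <;> fin_cases j <;>
    simp [Mcam, Matrix.mul_apply, Fin.sum_univ_succ, hu, hv] <;> ring

lemma rank_Mcam_le_two {b : Fin 7 → ℝ} (hu : b 4 = b 0 * b 3) (hv : b 5 = b 1 * b 3) :
    (Mcam b).rank ≤ 2 := by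
  rw [Mcam_eq_mul_of_degenerate hu hv]
  exact (rank_mul_le_right _ _).trans ((rank_le_card_height _).trans_eq (Fintype.card_fin 2))

lemma ne_zero_or_ne_zero_of_rank_Mcam_eq_three {b : Fin 7 → ℝ} (hrank : (Mcam b).rank = 3) :
    b 4 - b 0 * b 3 ≠ 0 ∨ b 5 - b 1 * b 3 ≠ 0 := by
  by_contra! h
  have := rank_Mcam_le_two (sub_eq_zero.mp h.1) (sub_eq_zero.mp h.2)
  omega

/-- If `rank M(b) = 3`, the 5×4 matrix with rows `(b₄, 0, 1, 0)`, `(0, b₄, 0, 1)`,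
`(b₅, 0, b₁, 0)`, `(b₆, b₅, b₂, b₁)`, `(0, b₆, 0, b₂)` has trivial kernel
(i.e. it has rank 4). -/
theorem coefficient_matrix_trivial_kernel
    (b : Fin 7 → ℝ) (hrank : (Mcam b).rank = 3) (α : Fin 4 → ℝ)
    (h : (!![b 3, 0, 1, 0;
             0, b 3, 0, 1;
             b 4, 0, b 0, 0;
             b 5, b 4, b 1, b 0;
             0, b 5, 0, b 1] : Matrix (Fin 5) (Fin 4) ℝ).mulVec α = 0) :
    α = 0 := by
  have row (i : Fin 5) := congrFun h i
  simp only [mulVec, dotProduct, Fin.sum_univ_four] at row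
  have h₀ : b 3 * α 0 + α 2 = 0 := by simpa using row 0
  have h₁ : b 3 * α 1 + α 3 = 0 := by simpa using row 1
  have h₂ : b 4 * α 0 + b 0 * α 2 = 0 := by simpa using row 2
  have h₃ : b 5 * α 0 + b 4 * α 1 + b 1 * α 2 + b 0 * α 3 = 0 := by simpa using row 3
  have h₄ : b 5 * α 1 + b 1 * α 3 = 0 := by simpa using row 4
  obtain ⟨hα₀, hα₁⟩ := eq_zero_of_linear_mul_eq_zero (a₀ := α 0) (a₁ := α 1)
    (ne_zero_or_ne_zero_of_rank_Mcam_eq_three hrank)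
    (by linear_combination h₂ - b 0 * h₀)
    (by linear_combination h₃ - b 1 * h₀ - b 0 * h₁)
    (by linear_combination h₄ - b 1 * h₁)
  ext i
  fin_cases i
  · exact hα₀
  · exact hα₁
  · show α 2 = 0
    linear_combination h₀ - b 3 * hα₀
  · show α 3 = 0
    linear_combination h₁ - b 3 * hα₁
end
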